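/- arXiv:2003.05174 — 5 statements merged into one kernel-verified Lean document; each statement's English description precedes it below -/
import Mathlib

section
/- Let $D_1, D_2, \ldots$ be i.i.d. nonnegative random variables such that $\mathbb{P}(D_i \geq i) \leq \exp(-i/(2\sigma^2))$ for all $i \geq 1$, where $\sigma > 0$. Define $V = \sum_{i=1}^{\infty} \mathbb{I}(D_i \geq i)$. Then for every integer $j \geq 1$, $\mathbb{P}(V \geq j) \leq (2\sigma^2)^j \exp\left(-\frac{j(j-1)}{4\sigma^2}\right)$. -/
open MeasureTheory ProbabilityTheory
open scoped ENNReal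

/-!
If at least `j` of the events `Aᵢ = {D_{i+1} ≥ i+1}` occur, then all events along some strictly
increasing tuple `g : Fin j → ℕ` occur, so by the union bound and independence
`P(V ≥ j) ≤ ∑_g ∏_k P(A_{g k})`. Since `g k ≥ k`, the shift `g ↦ (g k - k)ₖ` injects these
tuples into `ℕ^j`, and the sum factorises as `∏_k ∑_i P(A_{k+i})`. With `c = 1/(2σ²)` and
`q = e^{-c}`, the `k`-th factor is a geometric tail `q^{k+1}/(1-q) ≤ q^k/c`, because
`1/(e^c - 1) ≤ 1/c`; finally `∏_{k<j} q^k = q^{j(j-1)/2}`.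
-/

theorem ENNReal.tsum_fin_pi_prod {α : Type*} :
    ∀ {n : ℕ} (f : Fin n → α → ℝ≥0∞), ∑' g : Fin n → α, ∏ k, f k (g k) = ∏ k, ∑' a, f k a
  | 0, f => by simp
  | n + 1, f => by
    rw [← (Fin.consEquiv fun _ ↦ α).tsum_eq]
    simp only [Fin.consEquiv_apply, Fin.prod_univ_succ, Fin.cons_zero, Fin.cons_succ]
    rw [ENNReal.tsum_prod (f := fun (a : α) (g : Fin n → α) ↦ f 0 a * ∏ k, f k.succ (g k)),
      ← ENNReal.tsum_mul_right]
    simp only [ENNReal.tsum_mul_left, ENNReal.tsum_fin_pi_prod]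

theorem StrictMono.val_le_apply {n : ℕ} {g : Fin n → ℕ} (hg : StrictMono g) :
    ∀ k : Fin n, (k : ℕ) ≤ g k
  | ⟨0, _⟩ => Nat.zero_le _
  | ⟨m + 1, hm⟩ =>
    (hg.val_le_apply ⟨m, by omega⟩).trans_lt (hg (Fin.mk_lt_mk.2 m.lt_succ_self))

theorem Set.exists_strictMono_fin_of_le_tsum_indicator {T : Set ℕ} {j : ℕ}
    (h : (j : ℝ≥0∞) ≤ ∑' i, T.indicator 1 i) : ∃ g : Fin j → ℕ, StrictMono g ∧ ∀ k, g k ∈ T := by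
  rw [← tsum_subtype, Pi.one_def, ENNReal.tsum_set_one] at h
  obtain ⟨t, htT, htj⟩ := Set.exists_subset_encard_eq (k := j) (by exact_mod_cast h)
  have ht : t.Finite := Set.finite_of_encard_eq_coe htj
  have hcard : ht.toFinset.card = j := by
    rw [ht.encard_eq_coe_toFinset_card] at htj; exact_mod_cast htj
  exact ⟨fun k ↦ ht.toFinset.orderEmbOfFin hcard k, (ht.toFinset.orderEmbOfFin hcard).strictMono,
    fun k ↦ htT (ht.mem_toFinset.1 (ht.toFinset.orderEmbOfFin_mem hcard k))⟩

theorem ProbabilityTheory.iIndepFun.iIndepSet_preimage {Ω ι β : Type*} [MeasurableSpace Ω]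
    [MeasurableSpace β] {μ : Measure Ω} {f : ι → Ω → β} (hf : iIndepFun f μ) (t : ι → Set β)
    (ht : ∀ i, MeasurableSet (t i)) : iIndepSet (fun i ↦ f i ⁻¹' t i) μ := by
  rw [iIndepSet_iff]
  intro s g hg
  exact hf.meas_biInter fun i hi ↦ MeasurableSpace.generateFrom_le
    (by rintro _ rfl; exact ⟨t i, ht i, rfl⟩) _ (hg i hi)

theorem ProbabilityTheory.iIndepSet.measure_le_tsum_indicator_le_prod {Ω : Type*}
    [MeasurableSpace Ω] {μ : Measure Ω} {A : ℕ → Set Ω} (hA : iIndepSet A μ) (j : ℕ) :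
    μ {ω | (j : ℝ≥0∞) ≤ ∑' i, (A i).indicator 1 ω} ≤ ∏ k : Fin j, ∑' i, μ (A (k + i)) := by
  let S := {g : Fin j → ℕ // StrictMono g}
  have hcover : {ω | (j : ℝ≥0∞) ≤ ∑' i, (A i).indicator 1 ω} ⊆ ⋃ g : S, ⋂ k, A (g.1 k) := by
    intro ω hω
    obtain ⟨g, hg, hgA⟩ := Set.exists_strictMono_fin_of_le_tsum_indicator (T := {i | ω ∈ A i}) hω
    exact Set.mem_iUnion.2 ⟨⟨g, hg⟩, Set.mem_iInter.2 hgA⟩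
  have hinter (g : S) : μ (⋂ k, A (g.1 k)) = ∏ k, μ (A (k + (g.1 k - k))) := by
    simpa [Nat.add_sub_cancel' (g.2.val_le_apply _)] using
      (hA.precomp g.2.injective).meas_biInter Finset.univ
  have hshift : Function.Injective fun (g : S) (k : Fin j) ↦ g.1 k - k := fun g g' h ↦
    Subtype.ext <| funext fun k ↦ by
      have := congrFun h k
      have := g.2.val_le_apply k
      have := g'.2.val_le_apply k
      dsimp only at *
      omega
  calc μ {ω | (j : ℝ≥0∞) ≤ ∑' i, (A i).indicator 1 ω}
      ≤ ∑' g : S, μ (⋂ k, A (g.1 k)) := (measure_mono hcover).trans (measure_iUnion_le _)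
    _ = ∑' g : S, ∏ k, μ (A (k + (g.1 k - k))) := tsum_congr hinter
    _ ≤ ∑' h : Fin j → ℕ, ∏ k, μ (A (k + h k)) :=
      ENNReal.tsum_comp_le_tsum_of_injective hshift fun h ↦ ∏ k, μ (A (k + h k))
    _ = ∏ k : Fin j, ∑' i, μ (A (k + i)) := ENNReal.tsum_fin_pi_prod fun k i ↦ μ (A (k + i))

namespace Real

theorem exp_neg_div_one_sub_exp_neg_le {c : ℝ} (hc : 0 < c) :
    exp (-c) / (1 - exp (-c)) ≤ c⁻¹ := by
  have hlt : exp (-c) < 1 := exp_lt_one_iff.2 (neg_neg_of_pos hc)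
  have hmul : exp (-c) * exp c = 1 := by rw [← exp_add, neg_add_cancel, exp_zero]
  rw [div_le_iff₀ (by linarith), ← div_eq_inv_mul, le_div_iff₀ hc]
  nlinarith [add_one_le_exp c, exp_pos (-c)]

theorem tsum_ofReal_exp_neg_pow_le {c : ℝ} (hc : 0 < c) (k : ℕ) :
    ∑' i : ℕ, ENNReal.ofReal (exp (-c) ^ (k + i + 1)) ≤ ENNReal.ofReal (c⁻¹ * exp (-c) ^ k) := by
  have hq : exp (-c) < 1 := exp_lt_one_iff.2 (neg_neg_of_pos hc)
  have hgeom := summable_geometric_of_lt_one (exp_pos (-c)).le hq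
  rw [← ENNReal.ofReal_tsum_of_nonneg (fun i ↦ by positivity)
    (by simpa [pow_add, mul_comm, mul_assoc] using hgeom.mul_left (exp (-c) ^ k * exp (-c)))]
  refine ENNReal.ofReal_le_ofReal ?_
  calc ∑' i : ℕ, exp (-c) ^ (k + i + 1) = exp (-c) ^ k * (exp (-c) / (1 - exp (-c))) := by
        simp_rw [pow_succ, pow_add, mul_right_comm _ _ (exp (-c)), tsum_mul_left,
          tsum_geometric_of_lt_one (exp_pos (-c)).le hq, div_eq_mul_inv, mul_assoc]
    _ ≤ c⁻¹ * exp (-c) ^ k := by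
        rw [mul_comm _ (exp (-c) ^ k)]
        exact mul_le_mul_of_nonneg_left (exp_neg_div_one_sub_exp_neg_le hc) (by positivity)

theorem prod_range_exp_neg_pow (c : ℝ) (j : ℕ) :
    ∏ k ∈ Finset.range j, exp (-c) ^ k = exp (-(c * (j * (j - 1) / 2))) := by
  induction j with
  | zero => simp
  | succ j ih =>
    rw [Finset.prod_range_succ, ih, ← exp_nat_mul, ← exp_add]
    push_cast
    ring_nf

end Real

theorem stmt_0_general {Ω : Type*} [MeasurableSpace Ω] (μ : Measure Ω)
    (σ : ℝ) (hσ : 0 < σ) (D : ℕ → Ω → ℝ)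
    (hindep : iIndepFun D μ)
    (htail : ∀ i : ℕ, 1 ≤ i →
      μ {ω | (i : ℝ) ≤ D i ω} ≤ ENNReal.ofReal (Real.exp (-(i : ℝ) / (2 * σ ^ 2))))
    (j : ℕ) :
    μ {ω | (j : ℝ≥0∞) ≤ ∑' i : ℕ,
        Set.indicator {ω' | ((i : ℝ) + 1) ≤ D (i + 1) ω'} (fun _ => (1 : ℝ≥0∞)) ω}
      ≤ ENNReal.ofReal ((2 * σ ^ 2) ^ j *
          Real.exp (-((j : ℝ) * ((j : ℝ) - 1)) / (4 * σ ^ 2))) := by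
  set c : ℝ := (2 * σ ^ 2)⁻¹ with hc_def
  have hc : 0 < c := by positivity
  let A (i : ℕ) : Set Ω := D (i + 1) ⁻¹' Set.Ici ((i + 1 : ℕ) : ℝ)
  have hA : iIndepSet A μ :=
    (hindep.iIndepSet_preimage (fun i ↦ Set.Ici (i : ℝ)) fun _ ↦ measurableSet_Ici).precomp
      (g := Nat.succ) Nat.succ_injective
  have hμA (i : ℕ) : μ (A i) ≤ ENNReal.ofReal (Real.exp (-c) ^ (i + 1)) := by
    refine (htail (i + 1) (Nat.le_add_left 1 i)).trans_eq ?_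
    rw [← Real.exp_nat_mul, hc_def]
    ring_nf
  have hsets : ∀ i : ℕ, {ω' | ((i : ℝ) + 1) ≤ D (i + 1) ω'} = A i := fun i ↦ by ext; simp [A]
  simp_rw [hsets]
  calc _ ≤ ∏ k : Fin j, ∑' i, μ (A (k + i)) := hA.measure_le_tsum_indicator_le_prod j
    _ ≤ ∏ k : Fin j, ENNReal.ofReal (c⁻¹ * Real.exp (-c) ^ (k : ℕ)) :=
      Finset.prod_le_prod' fun k _ ↦
        (ENNReal.tsum_le_tsum fun i ↦ hμA _).trans (Real.tsum_ofReal_exp_neg_pow_le hc k)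
    _ = _ := by
      rw [← ENNReal.ofReal_prod_of_nonneg fun _ _ ↦ by positivity, Finset.prod_mul_distrib,
        Finset.prod_const, Finset.card_univ, Fintype.card_fin, inv_inv,
        Fin.prod_univ_eq_prod_range (Real.exp (-c) ^ ·), Real.prod_range_exp_neg_pow]
      congr 3
      rw [hc_def]
      field_simp
      ring

theorem stmt_0 {Ω : Type*} [MeasurableSpace Ω] (μ : Measure Ω) [IsProbabilityMeasure μ]
    (σ : ℝ) (hσ : 0 < σ) (D : ℕ → Ω → ℝ)
    (hmeas : ∀ i, Measurable (D i))
    (hnn : ∀ i ω, 0 ≤ D i ω)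
    (hindep : iIndepFun D μ)
    (hident : ∀ i j, IdentDistrib (D i) (D j) μ μ)
    (htail : ∀ i : ℕ, 1 ≤ i →
      μ {ω | (i : ℝ) ≤ D i ω} ≤ ENNReal.ofReal (Real.exp (-(i : ℝ) / (2 * σ ^ 2))))
    (j : ℕ) (hj : 1 ≤ j) :
    μ {ω | (j : ℝ≥0∞) ≤ ∑' i : ℕ,
        Set.indicator {ω' | ((i : ℝ) + 1) ≤ D (i + 1) ω'} (fun _ => (1 : ℝ≥0∞)) ω}
      ≤ ENNReal.ofReal ((2 * σ ^ 2) ^ j *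
          Real.exp (-((j : ℝ) * ((j : ℝ) - 1)) / (4 * σ ^ 2))) :=
  stmt_0_general μ σ hσ D hindep htail j
end

section
/- Let $\sigma > 0$, $q \geq 0$, and let $D_1, D_2, \ldots$ be independent nonnegative random variables with $\mathbb{P}(D_i \geq x) \leq \exp(-x^{1+q}/(2\sigma^2))$ for all $x \geq 1$ and all $i$. Define $V = \sum_{i=1}^{\infty} \mathbb{I}(D_i \geq i)$. Then for every integer $j \geq 1$, $\mathbb{P}(V \geq j) \leq (2\sigma^2 + 1)^j \exp\left(-\frac{(j-1)^{2+q}}{2(2+q)\sigma^2}\right)$. -/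
/-!
If `V ≥ j`, there are indices `i₁ < ⋯ < iⱼ` with `D_{iₖ} ≥ iₖ`. A union bound over such tuples
and independence bound `ℙ(V ≥ j)` by `∑ ∏ₖ p(iₖ)`, where `p(i) = exp(-i^{1+q}/(2σ²))`. Since
`iₖ ≥ k`, this is at most `∏ₖ ∑_{i ≥ k} p(i)`. Each tail sum is dominated by a geometric series,
because `(k + m)^{1+q} ≥ k^{1+q} + m`, giving the factor `2σ² + 1`; finally
`∑_{k ≤ j} k^{1+q} ≥ j^{2+q}/(2+q)` by comparison with `∫₀ʲ x^{1+q} dx`.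
-/

open MeasureTheory ProbabilityTheory
open scoped ENNReal

lemma Real.sub_le_rpow_sub_rpow {p x y : ℝ} (hp : 1 ≤ p) (hy : 1 ≤ y) (hxy : y ≤ x) :
    x - y ≤ x ^ p - y ^ p := by
  have hy0 : 0 ≤ y := by linarith
  have hx0 : 0 ≤ x := by linarith
  have hx : x ^ p = x * x ^ (p - 1) := by
    rw [← Real.rpow_one_add' hx0 (by linarith), add_sub_cancel]
  have hy' : y ^ p = y * y ^ (p - 1) := by
    rw [← Real.rpow_one_add' hy0 (by linarith), add_sub_cancel]
  have hmono : y ^ (p - 1) ≤ x ^ (p - 1) := Real.rpow_le_rpow hy0 hxy (by linarith)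
  have hone : 1 ≤ y ^ (p - 1) := Real.one_le_rpow hy (by linarith)
  rw [hx, hy']
  nlinarith

lemma Real.inv_one_sub_exp_neg_le {a : ℝ} (ha : 0 < a) : (1 - Real.exp (-a))⁻¹ ≤ 1 + a⁻¹ := by
  have hexp : Real.exp (-a) * (1 + a) ≤ 1 := by
    rw [Real.exp_neg, inv_mul_le_iff₀ (Real.exp_pos a), mul_one, add_comm]
    exact Real.add_one_le_exp a
  have hpos : 0 < 1 - Real.exp (-a) := by
    rw [sub_pos, Real.exp_lt_one_iff]; linarith
  rw [inv_le_iff_one_le_mul₀ hpos]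
  field_simp
  nlinarith

lemma tsum_ofReal_exp_neg_rpow_add_le {s p x : ℝ} (hs : 0 < s) (hp : 1 ≤ p) (hx : 1 ≤ x) :
    ∑' m : ℕ, ENNReal.ofReal (Real.exp (-(x + m) ^ p / s))
      ≤ ENNReal.ofReal ((s + 1) * Real.exp (-x ^ p / s)) := by
  set r := Real.exp (-s⁻¹)
  set C := Real.exp (-x ^ p / s)
  have hterm (m : ℕ) : Real.exp (-(x + m) ^ p / s) ≤ C * r ^ m := by
    have hgap := Real.sub_le_rpow_sub_rpow hp hx (le_add_of_nonneg_right m.cast_nonneg)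
    rw [← Real.exp_nat_mul, ← Real.exp_add, Real.exp_le_exp, mul_neg, ← div_eq_mul_inv, ← neg_div,
      ← add_div, div_le_div_iff_of_pos_right hs]
    linarith
  have hgeom : (1 - ENNReal.ofReal r)⁻¹ = ENNReal.ofReal ((1 - r)⁻¹) := by
    have hr1 : r < 1 := Real.exp_lt_one_iff.2 (neg_lt_zero.2 (inv_pos.2 hs))
    rw [ENNReal.ofReal_inv_of_pos (by linarith), ENNReal.ofReal_sub _ (Real.exp_pos _).le,
      ENNReal.ofReal_one]
  calc ∑' m : ℕ, ENNReal.ofReal (Real.exp (-(x + m) ^ p / s))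
      ≤ ∑' m : ℕ, ENNReal.ofReal C * ENNReal.ofReal r ^ m := by
        refine ENNReal.tsum_le_tsum fun m => ?_
        rw [← ENNReal.ofReal_pow (Real.exp_pos _).le, ← ENNReal.ofReal_mul (Real.exp_pos _).le]
        exact ENNReal.ofReal_le_ofReal (hterm m)
    _ = ENNReal.ofReal (C * (1 - r)⁻¹) := by
        rw [ENNReal.tsum_mul_left, ENNReal.tsum_geometric, hgeom,
          ← ENNReal.ofReal_mul (Real.exp_pos _).le]
    _ ≤ ENNReal.ofReal ((s + 1) * C) := by
        refine ENNReal.ofReal_le_ofReal ?_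
        rw [mul_comm]
        refine mul_le_mul_of_nonneg_right ?_ (Real.exp_pos _).le
        simpa [add_comm] using Real.inv_one_sub_exp_neg_le (inv_pos.2 hs)

lemma rpow_add_one_le_mul_sum_rpow {p : ℝ} (hp : 0 ≤ p) (n : ℕ) :
    (n : ℝ) ^ (p + 1) ≤ (p + 1) * ∑ k ∈ Finset.range n, ((k : ℝ) + 1) ^ p := by
  have hint : ∫ x in (0 : ℝ)..(0 + n), x ^ p = (n : ℝ) ^ (p + 1) / (p + 1) := by
    rw [zero_add, integral_rpow (by left; linarith), Real.zero_rpow (by linarith), sub_zero]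
  have hmono : MonotoneOn (fun x : ℝ => x ^ p) (Set.Icc 0 (0 + n)) :=
    (Real.monotoneOn_rpow_Ici_of_exponent_nonneg hp).mono Set.Icc_subset_Ici_self
  have := hmono.integral_le_sum
  rw [hint, div_le_iff₀' (by linarith)] at this
  simpa [add_comm] using this

lemma prod_exp_neg_rpow_le {s p : ℝ} (hs : 0 < s) (hp : 0 ≤ p) {n : ℕ} (hn : 1 ≤ n) :
    ∏ k : Fin n, Real.exp (-((k : ℝ) + 1) ^ p / s)
      ≤ Real.exp (-((n : ℝ) - 1) ^ (p + 1) / ((p + 1) * s)) := by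
  rw [← Real.exp_sum, Real.exp_le_exp, ← Finset.sum_div, Finset.sum_neg_distrib,
    Fin.sum_univ_eq_sum_range (fun k => ((k : ℝ) + 1) ^ p), neg_div, neg_div, neg_le_neg_iff,
    div_le_div_iff₀ (by positivity) hs, ← mul_assoc]
  have hn' : (0 : ℝ) ≤ n - 1 := by rw [sub_nonneg]; exact_mod_cast hn
  refine mul_le_mul_of_nonneg_right ?_ hs.le
  calc ((n : ℝ) - 1) ^ (p + 1) ≤ (n : ℝ) ^ (p + 1) :=
        Real.rpow_le_rpow hn' (by linarith) (by linarith)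
    _ ≤ (p + 1) * ∑ k ∈ Finset.range n, ((k : ℝ) + 1) ^ p := rpow_add_one_le_mul_sum_rpow hp n
    _ = _ := mul_comm _ _

lemma Fin.val_le_of_strictMono {n : ℕ} {f : Fin n → ℕ} (hf : StrictMono f) (k : Fin n) :
    (k : ℕ) ≤ f k := by
  obtain ⟨k, hk⟩ := k
  induction k with
  | zero => exact Nat.zero_le _
  | succ m ih => exact (ih (by omega)).trans_lt (hf (Fin.mk_lt_mk.2 m.lt_succ_self))

lemma ENNReal.tsum_pi_prod_eq_prod_tsum {α : Type*} (n : ℕ) (h : Fin n → α → ℝ≥0∞) :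
    ∑' g : Fin n → α, ∏ k, h k (g k) = ∏ k, ∑' a, h k a := by
  induction n with
  | zero => simp
  | succ n ih =>
    rw [← (Fin.consEquiv fun _ => α).tsum_eq, ENNReal.tsum_prod', Fin.prod_univ_succ,
      ← ih, ← ENNReal.tsum_mul_right]
    refine tsum_congr fun a => ?_
    rw [← ENNReal.tsum_mul_left]
    refine tsum_congr fun g => ?_
    rw [Fin.prod_univ_succ]
    rfl

lemma tsum_prod_strictMono_le_prod_tsum (c : ℕ → ℝ≥0∞) (n : ℕ) :
    ∑' f : {f : Fin n → ℕ // StrictMono f}, ∏ k, c (f.1 k) ≤ ∏ k : Fin n, ∑' i, c (i + k) := by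
  have hinj : Function.Injective fun (f : {f : Fin n → ℕ // StrictMono f}) (k : Fin n) =>
      f.1 k - k := by
    intro f g hfg
    ext k
    have hk : f.1 k - k = g.1 k - k := congr_fun hfg k
    have hf := Fin.val_le_of_strictMono f.2 k
    have hg := Fin.val_le_of_strictMono g.2 k
    omega
  calc ∑' f : {f : Fin n → ℕ // StrictMono f}, ∏ k, c (f.1 k)
      = ∑' f : {f : Fin n → ℕ // StrictMono f}, ∏ k, c ((f.1 k - k) + k) := by
        congr! with f k
        rw [Nat.sub_add_cancel (Fin.val_le_of_strictMono f.2 k)]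
    _ ≤ ∑' g : Fin n → ℕ, ∏ k, c (g k + k) :=
        ENNReal.tsum_comp_le_tsum_of_injective hinj fun g => ∏ k, c (g k + k)
    _ = ∏ k : Fin n, ∑' i, c (i + k) := ENNReal.tsum_pi_prod_eq_prod_tsum n fun k i => c (i + k)

lemma setOf_natCast_le_tsum_indicator_subset {Ω : Type*} (A : ℕ → Set Ω) (n : ℕ) :
    {ω | (n : ℝ≥0∞) ≤ ∑' i, (A i).indicator 1 ω} ⊆
      ⋃ f : {f : Fin n → ℕ // StrictMono f}, ⋂ k, A (f.1 k) := by
  intro ω hω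
  have hcount : ∑' i, (A i).indicator 1 ω = ({i | ω ∈ A i}.encard : ℝ≥0∞) := by
    rw [← ENNReal.tsum_set_one, tsum_subtype {i | ω ∈ A i} fun _ => (1 : ℝ≥0∞)]
    rfl
  have hn : (n : ℕ∞) ≤ {i | ω ∈ A i}.encard := by
    exact_mod_cast (show _ ≤ _ from hω).trans_eq hcount
  obtain ⟨t, hts, htn⟩ := Set.exists_subset_encard_eq hn
  lift t to Finset ℕ using Set.finite_of_encard_eq_coe htn
  have htcard : t.card = n := by exact_mod_cast htn
  refine Set.mem_iUnion.2 ⟨⟨t.orderEmbOfFin htcard, (t.orderEmbOfFin htcard).strictMono⟩, ?_⟩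
  exact Set.mem_iInter.2 fun k => hts (t.orderEmbOfFin_mem htcard k)

lemma measure_natCast_le_tsum_indicator_le_prod_tsum {Ω : Type*} [MeasurableSpace Ω]
    (μ : Measure Ω) {A : ℕ → Set Ω} {c : ℕ → ℝ≥0∞} {n : ℕ}
    (h : ∀ f : Fin n → ℕ, StrictMono f → μ (⋂ k, A (f k)) ≤ ∏ k, c (f k)) :
    μ {ω | (n : ℝ≥0∞) ≤ ∑' i, (A i).indicator 1 ω} ≤ ∏ k : Fin n, ∑' i, c (i + k) :=
  calc μ {ω | (n : ℝ≥0∞) ≤ ∑' i, (A i).indicator 1 ω}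
      ≤ μ (⋃ f : {f : Fin n → ℕ // StrictMono f}, ⋂ k, A (f.1 k)) :=
        measure_mono (setOf_natCast_le_tsum_indicator_subset A n)
    _ ≤ ∑' f : {f : Fin n → ℕ // StrictMono f}, μ (⋂ k, A (f.1 k)) := measure_iUnion_le _
    _ ≤ ∑' f : {f : Fin n → ℕ // StrictMono f}, ∏ k, c (f.1 k) :=
        ENNReal.tsum_le_tsum fun f => h f.1 f.2
    _ ≤ ∏ k : Fin n, ∑' i, c (i + k) := tsum_prod_strictMono_le_prod_tsum c n

theorem stmt_1_general {Ω : Type*} [MeasurableSpace Ω] (μ : Measure Ω)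
    (σ q : ℝ) (hσ : 0 < σ) (hq : 0 ≤ q) (D : ℕ → Ω → ℝ)
    (hindep : iIndepFun D μ)
    (htail : ∀ i : ℕ, ∀ x : ℝ, 1 ≤ x →
      μ {ω | x ≤ D i ω} ≤ ENNReal.ofReal (Real.exp (-x ^ (1 + q) / (2 * σ ^ 2))))
    (j : ℕ) (hj : 1 ≤ j) :
    μ {ω | (j : ℝ≥0∞) ≤ ∑' i : ℕ,
        Set.indicator {ω' | ((i : ℝ) + 1) ≤ D (i + 1) ω'} (fun _ => (1 : ℝ≥0∞)) ω}
      ≤ ENNReal.ofReal ((2 * σ ^ 2 + 1) ^ j *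
          Real.exp (-((j : ℝ) - 1) ^ (2 + q) / (2 * (2 + q) * σ ^ 2))) := by
  have hs : 0 < 2 * σ ^ 2 := by positivity
  have hjoint (f : Fin j → ℕ) (hf : StrictMono f) :
      μ (⋂ k, {ω | ((f k : ℝ) + 1) ≤ D (f k + 1) ω})
        ≤ ∏ k, ENNReal.ofReal (Real.exp (-((f k : ℝ) + 1) ^ (1 + q) / (2 * σ ^ 2))) := by
    have hinj : Function.Injective fun k => f k + 1 := fun a b hab =>
      hf.injective (Nat.succ_injective hab)
    calc _ = ∏ k, μ {ω | ((f k : ℝ) + 1) ≤ D (f k + 1) ω} :=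
          (hindep.precomp hinj).meas_iInter fun k => ⟨Set.Ici _, measurableSet_Ici, rfl⟩
      _ ≤ _ := Finset.prod_le_prod' fun k _ =>
          htail _ _ (le_add_of_nonneg_left (Nat.cast_nonneg _))
  calc _ ≤ ∏ k : Fin j, ∑' i : ℕ,
          ENNReal.ofReal (Real.exp (-(((i + k : ℕ) : ℝ) + 1) ^ (1 + q) / (2 * σ ^ 2))) :=
        measure_natCast_le_tsum_indicator_le_prod_tsum μ
          (A := fun i => {ω | (i : ℝ) + 1 ≤ D (i + 1) ω})
          (c := fun i => ENNReal.ofReal (Real.exp (-((i : ℝ) + 1) ^ (1 + q) / (2 * σ ^ 2))))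
          hjoint
    _ ≤ ∏ k : Fin j, ENNReal.ofReal
          ((2 * σ ^ 2 + 1) * Real.exp (-((k : ℝ) + 1) ^ (1 + q) / (2 * σ ^ 2))) := by
        refine Finset.prod_le_prod' fun k _ => le_of_eq_of_le (tsum_congr fun i => ?_)
          (tsum_ofReal_exp_neg_rpow_add_le hs (by linarith) (by simp))
        push_cast
        ring_nf
    _ = ENNReal.ofReal ((2 * σ ^ 2 + 1) ^ j *
          ∏ k : Fin j, Real.exp (-((k : ℝ) + 1) ^ (1 + q) / (2 * σ ^ 2))) := by
        rw [← ENNReal.ofReal_prod_of_nonneg fun _ _ => by positivity, Finset.prod_mul_distrib,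
          Finset.prod_const, Finset.card_univ, Fintype.card_fin]
    _ ≤ _ := by
        refine ENNReal.ofReal_le_ofReal (mul_le_mul_of_nonneg_left ?_ (by positivity))
        have h := prod_exp_neg_rpow_le hs (add_nonneg zero_le_one hq) hj
        rwa [show 1 + q + 1 = 2 + q by ring,
          show (2 + q) * (2 * σ ^ 2) = 2 * (2 + q) * σ ^ 2 by ring] at h

theorem stmt_1 {Ω : Type*} [MeasurableSpace Ω] (μ : Measure Ω) [IsProbabilityMeasure μ]
    (σ q : ℝ) (hσ : 0 < σ) (hq : 0 ≤ q) (D : ℕ → Ω → ℝ)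
    (hmeas : ∀ i, Measurable (D i))
    (hnn : ∀ i ω, 0 ≤ D i ω)
    (hindep : iIndepFun D μ)
    (htail : ∀ i : ℕ, ∀ x : ℝ, 1 ≤ x →
      μ {ω | x ≤ D i ω} ≤ ENNReal.ofReal (Real.exp (-x ^ (1 + q) / (2 * σ ^ 2))))
    (j : ℕ) (hj : 1 ≤ j) :
    μ {ω | (j : ℝ≥0∞) ≤ ∑' i : ℕ,
        Set.indicator {ω' | ((i : ℝ) + 1) ≤ D (i + 1) ω'} (fun _ => (1 : ℝ≥0∞)) ω}
      ≤ ENNReal.ofReal ((2 * σ ^ 2 + 1) ^ j *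
          Real.exp (-((j : ℝ) - 1) ^ (2 + q) / (2 * (2 + q) * σ ^ 2))) :=
  stmt_1_general μ σ q hσ hq D hindep htail j hj
end

section
/- Let $p \in (0,1)$, $p \neq 1/2$, and let $\eta$ be the centered random variable with $\mathbb{P}(\eta = 1-p) = p$ and $\mathbb{P}(\eta = -p) = 1-p$. Then for all $\lambda \in \mathbb{R}$, $\mathbb{E}[\exp(\lambda \eta)] \leq \exp(\lambda^2 Q(p))$, where $Q(p) = \frac{1-2p}{4\log((1-p)/p)}$. -/
/-!
Write `q = 1 - p`, `L = log (q / p)` and `Q = (1 - 2p) / (4L)`. Since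
`E[exp (t η)] = exp (-p t) (p eᵗ + q)`, the claim is that the gap
`F t = Q t² + p t - log (p eᵗ + q)` is nonnegative. Because `4 Q L = 1 - 2p`, `F` is symmetric
about `L`, and `F 0 = F' 0 = 0`. Its derivative is `F' t = 2 Q t + p - σ (t - L)` with `σ` the
logistic function, which is convex on `(-∞, 0]`; so for `p < 1/2` (i.e. `L > 0`) `F'` is concave
on `(-∞, L]` with zeros at `0` and `L`. Hence `F` decreases up to `0` and increases on `[0, L]`,
so `F ≥ 0` on `(-∞, L]` and, by symmetry, everywhere. The case `p > 1/2` follows by exchanging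
`(p, λ)` with `(1 - p, -λ)`.
-/

open Real Set MeasureTheory

lemma convexOn_sigmoid_Iic : ConvexOn ℝ (Iic 0) sigmoid := by
  refine MonotoneOn.convexOn_of_deriv (convex_Iic 0) continuous_sigmoid.continuousOn
    differentiable_sigmoid.differentiableOn ?_
  rw [interior_Iic, deriv_sigmoid]
  intro x _ y hy hxy
  have hσ : sigmoid x ≤ sigmoid y := sigmoid_le hxy
  have hσy : sigmoid y ≤ 2⁻¹ := sigmoid_zero ▸ sigmoid_le (le_of_lt hy)
  dsimp only
  nlinarith

lemma sigmoid_sub_log_div {p q : ℝ} (hp : 0 < p) (hq : 0 < q) (t : ℝ) :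
    sigmoid (t - log (q / p)) = p * exp t / (p * exp t + q) := by
  rw [sigmoid_def, neg_sub, exp_sub, exp_log (div_pos hq hp)]
  field_simp

lemma hasDerivAt_log_mul_exp_add {p q : ℝ} (hp : 0 < p) (hq : 0 < q) (t : ℝ) :
    HasDerivAt (fun t => log (p * exp t + q)) (sigmoid (t - log (q / p))) t := by
  rw [sigmoid_sub_log_div hp hq]
  exact (((hasDerivAt_exp t).const_mul p).add_const q).log (by positivity)

noncomputable def kearnsSaulConst (p : ℝ) : ℝ := (1 - 2 * p) / (4 * log ((1 - p) / p))

lemma kearnsSaulConst_one_sub (p : ℝ) : kearnsSaulConst (1 - p) = kearnsSaulConst p := by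
  have hlog : log (p / (1 - p)) = -log ((1 - p) / p) := by rw [← log_inv, inv_div]
  rw [kearnsSaulConst, kearnsSaulConst, sub_sub_cancel, hlog]
  ring

/-- For `p = 1/2` both sides vanish, the left one through `log 1 = 0`. -/
lemma four_mul_log_mul_kearnsSaulConst {p : ℝ} (hp0 : 0 < p) (hp1 : p < 1) :
    4 * log ((1 - p) / p) * kearnsSaulConst p = 1 - 2 * p := by
  rcases eq_or_ne (log ((1 - p) / p)) 0 with hL | hL
  · have : (1 - p) / p = 1 := eq_one_of_pos_of_log_eq_zero (div_pos (by linarith) hp0) hL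
    rw [div_eq_one_iff_eq hp0.ne'] at this
    rw [hL]
    linarith
  · rw [kearnsSaulConst]
    field_simp

noncomputable def kearnsSaulGap (p t : ℝ) : ℝ :=
  kearnsSaulConst p * t ^ 2 + p * t - log (p * exp t + (1 - p))

noncomputable def kearnsSaulGapDeriv (p t : ℝ) : ℝ :=
  2 * kearnsSaulConst p * t + p - sigmoid (t - log ((1 - p) / p))

lemma kearnsSaulGap_zero (p : ℝ) : kearnsSaulGap p 0 = 0 := by
  simp [kearnsSaulGap]

lemma hasDerivAt_kearnsSaulGap {p : ℝ} (hp0 : 0 < p) (hp1 : p < 1) (t : ℝ) :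
    HasDerivAt (kearnsSaulGap p) (kearnsSaulGapDeriv p t) t := by
  have hpoly : HasDerivAt (fun t => kearnsSaulConst p * t ^ 2 + p * t)
      (2 * kearnsSaulConst p * t + p) t :=
    (((hasDerivAt_pow 2 t).const_mul _).add ((hasDerivAt_id t).const_mul p)).congr_deriv
      (by simp; ring)
  exact hpoly.sub (hasDerivAt_log_mul_exp_add hp0 (by linarith) t)

lemma kearnsSaulGap_two_mul_log_sub {p : ℝ} (hp0 : 0 < p) (hp1 : p < 1) (t : ℝ) :
    kearnsSaulGap p (2 * log ((1 - p) / p) - t) = kearnsSaulGap p t := by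
  set L := log ((1 - p) / p)
  have hq : 0 < 1 - p := by linarith
  have hexpL : exp L = (1 - p) / p := exp_log (div_pos hq hp0)
  have hreflect : p * exp (2 * L - t) + (1 - p) = exp L * exp (-t) * (p * exp t + (1 - p)) := by
    rw [exp_sub, two_mul, exp_add, hexpL, exp_neg]
    field_simp
    ring
  have hQL := four_mul_log_mul_kearnsSaulConst hp0 hp1
  rw [kearnsSaulGap, kearnsSaulGap, hreflect, log_mul (by positivity) (by positivity),
    log_mul (by positivity) (by positivity), log_exp, log_exp]
  linear_combination (L - t) * hQL

lemma kearnsSaulGapDeriv_zero {p : ℝ} (hp0 : 0 < p) (hp1 : p < 1) :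
    kearnsSaulGapDeriv p 0 = 0 := by
  rw [kearnsSaulGapDeriv, sigmoid_sub_log_div hp0 (by linarith)]
  simp

lemma kearnsSaulGapDeriv_log {p : ℝ} (hp0 : 0 < p) (hp1 : p < 1) :
    kearnsSaulGapDeriv p (log ((1 - p) / p)) = 0 := by
  rw [kearnsSaulGapDeriv, sub_self, sigmoid_zero]
  linear_combination four_mul_log_mul_kearnsSaulConst hp0 hp1 / 2

lemma concaveOn_kearnsSaulGapDeriv (p : ℝ) :
    ConcaveOn ℝ (Iic (log ((1 - p) / p))) (kearnsSaulGapDeriv p) := by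
  have hσ := convexOn_sigmoid_Iic.translate_right (-log ((1 - p) / p))
  have hpre : (fun z => -log ((1 - p) / p) + z) ⁻¹' Iic 0 = Iic (log ((1 - p) / p)) := by
    ext z; simp
  rw [hpre] at hσ
  have hlin : ConcaveOn ℝ (Iic (log ((1 - p) / p))) (fun t => 2 * kearnsSaulConst p * t + p) :=
    ((LinearMap.mul ℝ ℝ (2 * kearnsSaulConst p)).concaveOn (convex_Iic _)).add_const p
  have hsplit : kearnsSaulGapDeriv p
      = (fun t => 2 * kearnsSaulConst p * t + p) - sigmoid ∘ fun z => -log ((1 - p) / p) + z := by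
    ext t
    simp [kearnsSaulGapDeriv, neg_add_eq_sub]
  exact hsplit ▸ hlin.sub hσ

lemma log_one_sub_div_pos {p : ℝ} (hp0 : 0 < p) (hp : p < 1 / 2) : 0 < log ((1 - p) / p) :=
  log_pos ((one_lt_div hp0).2 (by linarith))

lemma kearnsSaulGapDeriv_nonpos {p t : ℝ} (hp0 : 0 < p) (hp : p < 1 / 2) (ht : t ≤ 0) :
    kearnsSaulGapDeriv p t ≤ 0 := by
  have hL := log_one_sub_div_pos hp0 hp
  have h := (concaveOn_kearnsSaulGapDeriv p).left_le_of_le_right'' (mem_Iic.2 (ht.trans hL.le))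
    self_mem_Iic ht hL
  rw [kearnsSaulGapDeriv_zero hp0 (by linarith), kearnsSaulGapDeriv_log hp0 (by linarith)] at h
  exact h le_rfl

lemma kearnsSaulGapDeriv_nonneg {p t : ℝ} (hp0 : 0 < p) (hp : p < 1 / 2)
    (ht : t ∈ Icc 0 (log ((1 - p) / p))) : 0 ≤ kearnsSaulGapDeriv p t := by
  have hL := log_one_sub_div_pos hp0 hp
  have h := (concaveOn_kearnsSaulGapDeriv p).ge_on_segment (mem_Iic.2 hL.le) self_mem_Iic
    (by rwa [segment_eq_Icc hL.le])
  rwa [kearnsSaulGapDeriv_zero hp0 (by linarith), kearnsSaulGapDeriv_log hp0 (by linarith),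
    min_self] at h

lemma kearnsSaulGap_nonneg_of_le_log {p t : ℝ} (hp0 : 0 < p) (hp : p < 1 / 2)
    (ht : t ≤ log ((1 - p) / p)) : 0 ≤ kearnsSaulGap p t := by
  have hderiv := hasDerivAt_kearnsSaulGap hp0 (by linarith)
  have hcont : Continuous (kearnsSaulGap p) :=
    continuous_iff_continuousAt.2 fun x => (hderiv x).continuousAt
  rw [← kearnsSaulGap_zero p]
  rcases le_total t 0 with ht0 | ht0
  · refine antitoneOn_of_hasDerivWithinAt_nonpos (convex_Iic 0) hcont.continuousOn
      (fun x _ => (hderiv x).hasDerivWithinAt)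
      (fun x hx => kearnsSaulGapDeriv_nonpos hp0 hp (interior_subset hx : x ∈ Iic 0))
      ht0 self_mem_Iic ht0
  · refine monotoneOn_of_hasDerivWithinAt_nonneg (convex_Icc 0 _) hcont.continuousOn
      (fun x _ => (hderiv x).hasDerivWithinAt)
      (fun x hx => kearnsSaulGapDeriv_nonneg hp0 hp (interior_subset hx))
      (left_mem_Icc.2 (ht0.trans ht)) ⟨ht0, ht⟩ ht0

lemma kearnsSaulGap_nonneg {p : ℝ} (hp0 : 0 < p) (hp : p < 1 / 2) (t : ℝ) :
    0 ≤ kearnsSaulGap p t := by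
  rcases le_total t (log ((1 - p) / p)) with ht | ht
  · exact kearnsSaulGap_nonneg_of_le_log hp0 hp ht
  · rw [← kearnsSaulGap_two_mul_log_sub hp0 (by linarith)]
    exact kearnsSaulGap_nonneg_of_le_log hp0 hp (by linarith)

lemma bernoulli_mgf_le_of_lt_half {p : ℝ} (hp0 : 0 < p) (hp : p < 1 / 2) (l : ℝ) :
    p * exp (l * (1 - p)) + (1 - p) * exp (l * -p) ≤ exp (l ^ 2 * kearnsSaulConst p) := by
  have hpos : 0 < p * exp l + (1 - p) := by have := exp_pos l; nlinarith
  have hlog : log (p * exp l + (1 - p)) ≤ kearnsSaulConst p * l ^ 2 + p * l := by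
    have h := kearnsSaulGap_nonneg hp0 hp l
    rw [kearnsSaulGap] at h
    linarith
  calc p * exp (l * (1 - p)) + (1 - p) * exp (l * -p)
      = exp (-(p * l)) * (p * exp l + (1 - p)) := by
        rw [mul_one_sub, sub_eq_add_neg, exp_add, mul_neg, mul_comm l p]; ring
    _ ≤ exp (-(p * l)) * exp (kearnsSaulConst p * l ^ 2 + p * l) := by
        gcongr
        rwa [← log_le_iff_le_exp hpos]
    _ = exp (l ^ 2 * kearnsSaulConst p) := by rw [← exp_add]; ring_nf

lemma bernoulli_mgf_le {p : ℝ} (hp0 : 0 < p) (hp1 : p < 1) (hp : p ≠ 1 / 2) (l : ℝ) :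
    p * exp (l * (1 - p)) + (1 - p) * exp (l * -p) ≤ exp (l ^ 2 * kearnsSaulConst p) := by
  rcases hp.lt_or_gt with hlt | hgt
  · exact bernoulli_mgf_le_of_lt_half hp0 hlt l
  · have h := bernoulli_mgf_le_of_lt_half (p := 1 - p) (by linarith) (by linarith) (-l)
    rw [kearnsSaulConst_one_sub, sub_sub_cancel, neg_sq] at h
    convert h using 1
    ring_nf

lemma integral_comp_of_two_values {Ω E : Type*} [MeasurableSpace Ω] [MeasurableSpace E]
    [MeasurableSingletonClass E] {μ : Measure Ω} [IsProbabilityMeasure μ] {X : Ω → E}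
    (hX : Measurable X) {a b : E} (hab : a ≠ b) {α β : ℝ} (hα : 0 ≤ α) (hβ : 0 ≤ β)
    (hαβ : α + β = 1) (ha : μ {ω | X ω = a} = ENNReal.ofReal α)
    (hb : μ {ω | X ω = b} = ENNReal.ofReal β) (f : E → ℝ) :
    ∫ ω, f (X ω) ∂μ = α * f a + β * f b := by
  set A := {ω | X ω = a}
  set B := {ω | X ω = b}
  have hA : MeasurableSet A := hX (measurableSet_singleton a)
  have hB : MeasurableSet B := hX (measurableSet_singleton b)
  have hAB : Disjoint A B := disjoint_left.2 fun ω hωa hωb => hab (hωa.symm.trans hωb)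
  have hfull : ∀ᵐ ω ∂μ, ω ∈ A ∪ B := by
    rw [ae_iff, ← compl_def, measure_compl (hA.union hB) (measure_ne_top μ _),
      measure_union hAB hB, ha, hb, ← ENNReal.ofReal_add hα hβ, hαβ]
    simp
  have hconst {c : E} {s : Set Ω} (hs : MeasurableSet s) (hXs : ∀ ω ∈ s, X ω = c) :
      ∫ ω in s, f (X ω) ∂μ = μ.real s * f c := by
    rw [setIntegral_congr_fun hs fun ω hω => congrArg f (hXs ω hω), setIntegral_const,
      smul_eq_mul]
  have hint {c : E} {s : Set Ω} (hs : MeasurableSet s) (hXs : ∀ ω ∈ s, X ω = c) :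
      IntegrableOn (fun ω => f (X ω)) s μ :=
    (integrableOn_const (C := f c)).congr_fun (fun ω hω => congrArg f (hXs ω hω).symm) hs
  calc ∫ ω, f (X ω) ∂μ = ∫ ω in A ∪ B, f (X ω) ∂μ := by
        rw [Measure.restrict_eq_self_of_ae_mem hfull]
    _ = ∫ ω in A, f (X ω) ∂μ + ∫ ω in B, f (X ω) ∂μ :=
        setIntegral_union hAB hB (hint hA fun _ => id) (hint hB fun _ => id)
    _ = α * f a + β * f b := by
        rw [hconst hA fun _ => id, hconst hB fun _ => id, measureReal_def, measureReal_def, ha, hb,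
          ENNReal.toReal_ofReal hα, ENNReal.toReal_ofReal hβ]

theorem stmt_7 {Ω : Type*} [MeasurableSpace Ω] (μ : Measure Ω) [IsProbabilityMeasure μ]
    (p : ℝ) (hp0 : 0 < p) (hp1 : p < 1) (hp : p ≠ 1 / 2)
    (η : Ω → ℝ) (hmeas : Measurable η)
    (h1 : μ {ω | η ω = 1 - p} = ENNReal.ofReal p)
    (h2 : μ {ω | η ω = -p} = ENNReal.ofReal (1 - p)) :
    ∀ l : ℝ, ∫ ω, Real.exp (l * η ω) ∂μ
      ≤ Real.exp (l ^ 2 * ((1 - 2 * p) / (4 * Real.log ((1 - p) / p)))) := by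
  intro l
  rw [integral_comp_of_two_values hmeas (fun h => by linarith) hp0.le (by linarith) (by ring) h1 h2
    fun x => exp (l * x)]
  exact bernoulli_mgf_le hp0 hp1 hp l
end

section
/- For every $p \in (0,1)$ with $p \neq 1/2$, the quantity $Q(p) = \frac{1-2p}{4\log((1-p)/p)}$ satisfies $0 < Q(p) \leq 1/4$. -/
theorem stmt_8 (p : ℝ) (hp0 : 0 < p) (hp1 : p < 1) (hp : p ≠ 1 / 2) :
    0 < (1 - 2 * p) / (4 * Real.log ((1 - p) / p)) ∧
      (1 - 2 * p) / (4 * Real.log ((1 - p) / p)) ≤ 1 / 4 := by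
  have h1p : (0:ℝ) < 1 - p := by linarith
  set L := Real.log ((1 - p) / p) with hLdef
  rcases lt_or_gt_of_ne hp with h | h
  · -- p < 1/2 : L > 0
    have hx1 : 1 < (1 - p) / p := (one_lt_div hp0).mpr (by linarith)
    have hL : 0 < L := Real.log_pos hx1
    -- lower bound: L ≥ 1 - p/(1-p)
    have hinv : Real.log (p / (1 - p)) ≤ p / (1 - p) - 1 :=
      Real.log_le_sub_one_of_pos (div_pos hp0 h1p)
    have hneg : Real.log (p / (1 - p)) = -L := by
      rw [hLdef, ← Real.log_inv, inv_div]
    have hlow : 1 - p / (1 - p) ≤ L := by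
      rw [hneg] at hinv; linarith
    have hfrac : p / (1 - p) ≤ p / (1 - p) := le_refl _
    have hkey : 1 - 2 * p ≤ L := by
      have : p / (1 - p) ≤ 2 * p := by
        rw [div_le_iff₀ h1p]; nlinarith
      linarith
    constructor
    · exact div_pos (by linarith) (by linarith)
    · rw [div_le_div_iff₀ (by linarith) (by norm_num)]
      linarith
  · -- p > 1/2 : L < 0
    have hx1 : (1 - p) / p < 1 := (div_lt_one hp0).mpr (by linarith)
    have hL : L < 0 := Real.log_neg (div_pos h1p hp0) hx1
    have hup : L ≤ (1 - p) / p - 1 :=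
      Real.log_le_sub_one_of_pos (div_pos h1p hp0)
    have hkey : L ≤ 1 - 2 * p := by
      have : (1 - p) / p - 1 ≤ 1 - 2 * p := by
        rw [div_sub_one hp0.ne', div_le_iff₀ hp0]; nlinarith
      linarith
    constructor
    · exact div_pos_of_neg_of_neg (by linarith) (by linarith)
    · have heq : (1 - 2 * p) / (4 * L) = (2 * p - 1) / (4 * (-L)) := by
        rw [div_eq_div_iff (by linarith) (by nlinarith)]; ring
      rw [heq, div_le_div_iff₀ (by nlinarith) (by norm_num)]
      linarith
end

section
/- Let $\mu_R \geq 0$, $\sigma_R > 0$, $q > 0$, and let $c = \left(\sum_{i=1}^{\infty} i^{-(1+q)}\right)^{-1} > 0$. Let $D_1, D_2, \ldots$ be nonnegative random variables (with arbitrary dependence) such that $\mathbb{P}(D_t - \mu_R \geq x) \leq \exp(-x^{2(1+q)}/\sigma_R^2)$ for all $x \geq 0$ and all $t$. Define $\tilde{G} = \sum_{t=1}^{\infty} \mathbb{I}(D_t - \mu_R \geq t)$. Then there exists a constant $C_4$ with $0 < C_4 \leq 2\sigma_R^2 + 1$ such that $\mathbb{P}(\tilde{G} > x) \leq C_4 \exp\left(-\frac{c^2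 x^2}{2\sigma_R^2}\right)$ for all $x \geq 0$. -/
/-!
If more than `x` of the events `{D (t + 1) ≥ μR + t + 1}` occur, then one with `t ≥ ⌊x⌋` occurs,
so a union bound gives `P(G̃ > x) ≤ ∑_{s ≥ 0} exp (-(⌊x⌋ + 1 + s) ^ (2(1+q)) / σR²)`. As
`(⌊x⌋ + 1 + s) ^ (2(1+q)) ≥ (⌊x⌋ + 1)² + s`, this is at most a geometric series,
`exp (-(⌊x⌋ + 1)² / σR²) / (1 - exp (-1/σR²)) ≤ (1 + σR²) exp (-x² / σR²)`, and `c ≤ 1`.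
-/

open MeasureTheory Set Real
open scoped ENNReal

lemma tsum_indicator_one_le_of_forall_notMem {α : Type*} (A : ℕ → Set α) {a : α} {N : ℕ}
    (h : ∀ t, N ≤ t → a ∉ A t) :
    ∑' t, (A t).indicator (fun _ => (1 : ℝ≥0∞)) a ≤ N := by
  rw [tsum_eq_sum (s := Finset.range N) fun t ht => indicator_of_notMem (h t (by simpa using ht)) _]
  calc ∑ t ∈ Finset.range N, (A t).indicator (fun _ => (1 : ℝ≥0∞)) a
      ≤ ∑ _t ∈ Finset.range N, (1 : ℝ≥0∞) :=
        Finset.sum_le_sum fun t _ => indicator_apply_le' (fun _ => le_rfl) fun _ => zero_le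
    _ = N := by simp

lemma measure_ofReal_lt_tsum_indicator_le {Ω : Type*} [MeasurableSpace Ω] (μ : Measure Ω)
    (A : ℕ → Set Ω) {x : ℝ} (hx : 0 ≤ x) :
    μ {ω | ENNReal.ofReal x < ∑' t, (A t).indicator (fun _ => (1 : ℝ≥0∞)) ω}
      ≤ ∑' s, μ (A (s + ⌊x⌋₊)) := by
  refine (measure_mono fun ω hω => ?_).trans (measure_iUnion_le _)
  by_contra hnot
  simp only [mem_iUnion, not_exists] at hnot
  refine hω.not_ge ((tsum_indicator_one_le_of_forall_notMem (N := ⌊x⌋₊) A fun t ht => ?_).trans ?_)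
  · simpa [Nat.sub_add_cancel ht] using hnot (t - ⌊x⌋₊)
  · rw [← ENNReal.ofReal_natCast]
    exact ENNReal.ofReal_le_ofReal (Nat.floor_le hx)

lemma add_one_sq_add_le_rpow {a b p : ℝ} (ha : 0 ≤ a) (hb : 0 ≤ b) (hp : 2 ≤ p) :
    (a + 1) ^ 2 + b ≤ (b + a + 1) ^ p :=
  calc (a + 1) ^ 2 + b ≤ (b + a + 1) ^ (2 : ℝ) := by norm_cast; nlinarith
    _ ≤ (b + a + 1) ^ p := rpow_le_rpow_of_exponent_le (by linarith) hp

lemma inv_one_sub_exp_neg_inv_le {v : ℝ} (hv : 0 < v) : (1 - exp (-v⁻¹))⁻¹ ≤ 1 + v := by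
  have hexp : exp (-v⁻¹) ≤ v / (v + 1) := by
    rw [exp_neg, ← inv_div]
    refine inv_anti₀ (by positivity) ?_
    calc (v + 1) / v = v⁻¹ + 1 := by field_simp; ring
      _ ≤ exp v⁻¹ := add_one_le_exp _
  have hpos : 0 < 1 - exp (-v⁻¹) := by
    rw [sub_pos, exp_lt_one_iff, neg_lt_zero]; positivity
  rw [inv_le_iff_one_le_mul₀ hpos]
  calc (1 : ℝ) = (1 + v) * (1 - v / (v + 1)) := by field_simp; ring_nf
    _ ≤ (1 + v) * (1 - exp (-v⁻¹)) := by gcongr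

lemma tsum_ofReal_exp_neg_rpow_le {v p : ℝ} (hv : 0 < v) (hp : 2 ≤ p) (N : ℕ) :
    ∑' s : ℕ, ENNReal.ofReal (exp (-(((s + N : ℕ) : ℝ) + 1) ^ p / v))
      ≤ ENNReal.ofReal ((1 + v) * exp (-((N : ℝ) + 1) ^ 2 / v)) := by
  set r := exp (-v⁻¹)
  have hr1 : r < 1 := by rw [exp_lt_one_iff, neg_lt_zero]; positivity
  have hterm (s : ℕ) :
      exp (-(((s + N : ℕ) : ℝ) + 1) ^ p / v) ≤ exp (-((N : ℝ) + 1) ^ 2 / v) * r ^ s := by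
    rw [← exp_nat_mul, ← exp_add, exp_le_exp,
      show -((N : ℝ) + 1) ^ 2 / v + s * -v⁻¹ = -(((N : ℝ) + 1) ^ 2 + s) / v by ring]
    push_cast
    gcongr
    exact add_one_sq_add_le_rpow N.cast_nonneg s.cast_nonneg hp
  calc ∑' s : ℕ, ENNReal.ofReal (exp (-(((s + N : ℕ) : ℝ) + 1) ^ p / v))
      ≤ ∑' s : ℕ, ENNReal.ofReal (exp (-((N : ℝ) + 1) ^ 2 / v) * r ^ s) :=
        ENNReal.tsum_le_tsum fun s => ENNReal.ofReal_le_ofReal (hterm s)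
    _ = ENNReal.ofReal (exp (-((N : ℝ) + 1) ^ 2 / v) * (1 - r)⁻¹) := by
        rw [← ENNReal.ofReal_tsum_of_nonneg (fun s => by positivity)
          ((summable_geometric_of_lt_one (by positivity) hr1).mul_left _),
          tsum_mul_left, tsum_geometric_of_lt_one (by positivity) hr1]
    _ ≤ ENNReal.ofReal ((1 + v) * exp (-((N : ℝ) + 1) ^ 2 / v)) := by
        rw [mul_comm]
        gcongr
        exact inv_one_sub_exp_neg_inv_le hv

-- Holds for every exponent: without summability the `tsum` is `0` and so is its inverse.
lemma inv_tsum_inv_rpow_succ_le_one (p : ℝ) : (∑' i : ℕ, (((i : ℝ) + 1) ^ p)⁻¹)⁻¹ ≤ 1 := by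
  by_cases hs : Summable fun i : ℕ => (((i : ℝ) + 1) ^ p)⁻¹
  · refine inv_le_one_of_one_le₀ ?_
    simpa using hs.le_tsum 0 fun j _ => by positivity
  · simp [tsum_eq_zero_of_not_summable hs]

theorem stmt_14_general {Ω : Type*} [MeasurableSpace Ω] (μ : Measure Ω)
    (μR σR q : ℝ) (hσR : 0 < σR) (hq : 0 < q)
    (c : ℝ) (hc : c = (∑' i : ℕ, (((i : ℝ) + 1) ^ (1 + q))⁻¹)⁻¹)
    (D : ℕ → Ω → ℝ)
    (htail : ∀ t : ℕ, ∀ x : ℝ, 0 ≤ x →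
      μ {ω | μR + x ≤ D t ω} ≤ ENNReal.ofReal (Real.exp (-x ^ (2 * (1 + q)) / σR ^ 2))) :
    ∃ C₄ : ℝ, 0 < C₄ ∧ C₄ ≤ 2 * σR ^ 2 + 1 ∧
      ∀ x : ℝ, 0 ≤ x →
        μ {ω | ENNReal.ofReal x < ∑' t : ℕ,
            Set.indicator {ω' | μR + ((t : ℝ) + 1) ≤ D (t + 1) ω'} (fun _ => (1 : ℝ≥0∞)) ω}
          ≤ ENNReal.ofReal (C₄ * Real.exp (-(c ^ 2 * x ^ 2) / (2 * σR ^ 2))) := by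
  have hv : 0 < σR ^ 2 := by positivity
  have hc0 : 0 ≤ c := hc ▸ by positivity
  have hc1 : c ≤ 1 := hc ▸ inv_tsum_inv_rpow_succ_le_one _
  refine ⟨1 + σR ^ 2, by positivity, by linarith, fun x hx => ?_⟩
  set N := ⌊x⌋₊
  have hcx : c ^ 2 * x ^ 2 / (2 * σR ^ 2) ≤ ((N : ℝ) + 1) ^ 2 / σR ^ 2 :=
    calc c ^ 2 * x ^ 2 / (2 * σR ^ 2) ≤ c ^ 2 * x ^ 2 / σR ^ 2 :=
          div_le_div_of_nonneg_left (by positivity) hv (by linarith)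
      _ ≤ 1 * x ^ 2 / σR ^ 2 := by gcongr; exact pow_le_one₀ hc0 hc1
      _ ≤ ((N : ℝ) + 1) ^ 2 / σR ^ 2 := by
          rw [one_mul]; gcongr; exact (Nat.lt_floor_add_one x).le
  calc _ ≤ ∑' s, μ {ω | μR + (((s + N : ℕ) : ℝ) + 1) ≤ D (s + N + 1) ω} :=
        measure_ofReal_lt_tsum_indicator_le μ _ hx
    _ ≤ ∑' s : ℕ, ENNReal.ofReal (exp (-(((s + N : ℕ) : ℝ) + 1) ^ (2 * (1 + q)) / σR ^ 2)) :=
        ENNReal.tsum_le_tsum fun s => htail _ _ (by positivity)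
    _ ≤ ENNReal.ofReal ((1 + σR ^ 2) * exp (-((N : ℝ) + 1) ^ 2 / σR ^ 2)) :=
        tsum_ofReal_exp_neg_rpow_le hv (by linarith) N
    _ ≤ _ := by
        gcongr ENNReal.ofReal (_ * exp ?_)
        rw [neg_div, neg_div, neg_le_neg_iff]
        exact hcx

theorem stmt_14 {Ω : Type*} [MeasurableSpace Ω] (μ : Measure Ω) [IsProbabilityMeasure μ]
    (μR σR q : ℝ) (hμR : 0 ≤ μR) (hσR : 0 < σR) (hq : 0 < q)
    (c : ℝ) (hc : c = (∑' i : ℕ, (((i : ℝ) + 1) ^ (1 + q))⁻¹)⁻¹)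
    (D : ℕ → Ω → ℝ) (hmeas : ∀ t, Measurable (D t)) (hnn : ∀ t ω, 0 ≤ D t ω)
    (htail : ∀ t : ℕ, ∀ x : ℝ, 0 ≤ x →
      μ {ω | μR + x ≤ D t ω} ≤ ENNReal.ofReal (Real.exp (-x ^ (2 * (1 + q)) / σR ^ 2))) :
    ∃ C₄ : ℝ, 0 < C₄ ∧ C₄ ≤ 2 * σR ^ 2 + 1 ∧
      ∀ x : ℝ, 0 ≤ x →
        μ {ω | ENNReal.ofReal x < ∑' t : ℕ,
            Set.indicator {ω' | μR + ((t : ℝ) + 1) ≤ D (t + 1) ω'} (fun _ => (1 : ℝ≥0∞)) ω}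
          ≤ ENNReal.ofReal (C₄ * Real.exp (-(c ^ 2 * x ^ 2) / (2 * σR ^ 2))) :=
  stmt_14_general μ μR σR q hσR hq c hc D htail
end
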